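/- For every integer d ≥ 1, the polynomial P(t, λ) = ∏_{i=1}^{d} (t + λ_i) − 2 Σ_{i=1}^{d} λ_i ∏_{k≠i} (t + λ_k), regarded as a univariate polynomial in t with coefficients in the field ℚ(λ₁, …, λ_d) of rational functions in d indeterminates over ℚ, is irreducible. -/

import Mathlib

/-!
Write `Q = ∏ᵢ (t + λᵢ)` and `W = ∑ᵢ λᵢ ∏_{k ≠ i} (t + λₖ)`, so that `P = Q - 2W`, and put
`T = Q + 2W`. Since `P` is monic with coefficients in the UFD `ℚ[λ₀, …, λₙ]`, Gauss's lemma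
reduces the claim to irreducibility over that ring. There `P` is linear in `λ₀`:
`P(t; λ₀, λ) = t P(t; λ) - λ₀ T(t; λ)`, so it suffices that the two coefficients are coprime in
`ℚ[λ₁, …, λₙ][t]`. A common prime factor would divide `t P + t T = 2t ∏ⱼ (t + λⱼ)`, hence be
associated to `t` or to some `t + λⱼ`; but `T(0) = (2n + 1) ∏ⱼ λⱼ` and
`T(-λⱼ) = 2λⱼ ∏_{k ≠ j} (λₖ - λⱼ)` are nonzero.
-/

/-- The image of the indeterminate `λ_i` in the rational function field
`ℚ(λ₁, …, λ_d)`. -/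
noncomputable def lamVar (d : ℕ) (i : Fin d) : FractionRing (MvPolynomial (Fin d) ℚ) :=
  algebraMap (MvPolynomial (Fin d) ℚ) (FractionRing (MvPolynomial (Fin d) ℚ))
    (MvPolynomial.X i)

/-- The polynomial `P(t, λ) = ∏ᵢ (t + λᵢ) - 2 ∑ᵢ λᵢ ∏_{k ≠ i} (t + λₖ)` as an element of
`ℚ(λ₁, …, λ_d)[t]`. -/
noncomputable def PPoly (d : ℕ) : Polynomial (FractionRing (MvPolynomial (Fin d) ℚ)) :=
  (∏ i : Fin d, (Polynomial.X + Polynomial.C (lamVar d i))) -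
    2 * ∑ i : Fin d, Polynomial.C (lamVar d i) *
      ∏ k ∈ Finset.univ.erase i, (Polynomial.X + Polynomial.C (lamVar d k))

namespace MvPolynomial

open scoped Polynomial

variable (R : Type*) [CommRing R] (n : ℕ)

noncomputable def finSuccSwap :
    (MvPolynomial (Fin (n + 1)) R)[X] ≃+* (MvPolynomial (Fin n) R)[X][X] :=
  (Polynomial.mapAlgEquiv (finSuccEquiv R n)).toRingEquiv.trans
    Polynomial.Bivariate.swap.toRingEquiv

variable {R n}

@[simp] lemma finSuccSwap_X : finSuccSwap R n Polynomial.X = Polynomial.C Polynomial.X := by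
  simp [finSuccSwap, Polynomial.Bivariate.swap_Y]

@[simp] lemma finSuccSwap_C_X_zero : finSuccSwap R n (Polynomial.C (X 0)) = Polynomial.X := by
  simp [finSuccSwap, finSuccEquiv_X_zero, Polynomial.Bivariate.swap_X]

@[simp] lemma finSuccSwap_C_X_succ (j : Fin n) :
    finSuccSwap R n (Polynomial.C (X j.succ)) = Polynomial.C (Polynomial.C (X j)) := by
  simp [finSuccSwap, finSuccEquiv_X_succ, Polynomial.Bivariate.swap_C_C]

end MvPolynomial

namespace Polynomial

lemma isRelPrime_X_sub_C_of_eval_ne_zero {R : Type*} [CommRing R] [IsDomain R] {a : R}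
    {p : R[X]} (h : p.eval a ≠ 0) : IsRelPrime (X - C a) p :=
  (irreducible_X_sub_C a).isRelPrime_iff_not_dvd.2 fun hd => h (dvd_iff_isRoot.1 hd)

end Polynomial

namespace PPoly

open Polynomial Finset

section CommRing

variable {K L F : Type*} [CommRing K] [CommRing L] [FunLike F K L] [RingHomClass F K L]
  {ι : Type*} [Fintype ι]

def Q (t : K) (l : ι → K) : K := ∏ i, (t + l i)

lemma map_Q (f : F) (t : K) (l : ι → K) : f (Q t l) = Q (f t) fun i => f (l i) := by
  simp [Q, map_prod]

lemma Q_zero (l : ι → K) : Q 0 l = ∏ i, l i := by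
  simp [Q]

lemma Q_neg_self (l : ι → K) (j : ι) : Q (-l j) l = 0 :=
  prod_eq_zero (mem_univ j) (neg_add_cancel _)

variable [DecidableEq ι]

def W (t : K) (l : ι → K) : K := ∑ i, l i * ∏ k ∈ univ.erase i, (t + l k)

def P (t : K) (l : ι → K) : K := Q t l - 2 * W t l

def T (t : K) (l : ι → K) : K := Q t l + 2 * W t l

lemma map_W (f : F) (t : K) (l : ι → K) : f (W t l) = W (f t) fun i => f (l i) := by
  simp [W, map_sum, map_prod]

lemma map_P (f : F) (t : K) (l : ι → K) : f (P t l) = P (f t) fun i => f (l i) := by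
  simp [P, map_Q, map_W, map_ofNat]

lemma map_T (f : F) (t : K) (l : ι → K) : f (T t l) = T (f t) fun i => f (l i) := by
  simp [T, map_Q, map_W, map_ofNat]

lemma W_zero (l : ι → K) : W 0 l = Fintype.card ι * ∏ i, l i := by
  simp [W, mul_prod_erase]

lemma W_neg_self (l : ι → K) (j : ι) :
    W (-l j) l = l j * ∏ k ∈ univ.erase j, (l k - l j) := by
  rw [W, sum_eq_single j]
  · simp [neg_add_eq_sub]
  · intro i _ hij
    exact mul_eq_zero_of_right _ (prod_eq_zero (mem_erase.2 ⟨Ne.symm hij, mem_univ j⟩)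
      (neg_add_cancel _))
  · simp

lemma P_cons {n : ℕ} (t y : K) (l : Fin n → K) :
    P t (Fin.cons y l : Fin (n + 1) → K) = t * P t l - y * T t l := by
  have hQ : Q t (Fin.cons y l : Fin (n + 1) → K) = (t + y) * Q t l := by
    simp [Q, Fin.prod_univ_succ]
  have hW : W t (Fin.cons y l : Fin (n + 1) → K) = y * Q t l + (t + y) * W t l := by
    simp [W, Q, ← filter_ne', prod_filter, Fin.prod_univ_succ, Fin.sum_univ_succ, mul_sum,
      (Fin.succ_ne_zero _).symm, mul_left_comm]
  rw [P, P, T, hQ, hW]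
  ring

lemma monic_P_X (l : ι → K) : (P X fun i => C (l i) : K[X]).Monic := by
  nontriviality K
  have hQ : (Q X fun i => C (l i) : K[X]).Monic :=
    monic_prod_of_monic _ _ fun i _ => monic_X_add_C _
  have hdegQ : (Q X fun i => C (l i) : K[X]).degree = Fintype.card ι := by
    rw [Q, degree_prod_of_monic _ _ fun i _ => monic_X_add_C _]
    simp
  have hdegW : (W X fun i => C (l i) : K[X]).degree < Fintype.card ι := by
    refine (degree_sum_le _ _).trans_lt ((Finset.sup_lt_iff (WithBot.bot_lt_coe _)).2 fun i _ => ?_)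
    refine (degree_mul_le _ _).trans_lt ?_
    rw [degree_prod_of_monic _ _ fun i _ => monic_X_add_C _]
    simp only [degree_X_add_C, sum_const, card_erase_of_mem (mem_univ i), card_univ, nsmul_one]
    refine (add_le_add_left degree_C_le _).trans_lt ?_
    rw [zero_add]
    exact_mod_cast Nat.sub_lt (Fintype.card_pos_iff.2 ⟨i⟩) one_pos
  refine hQ.sub_of_left ?_
  rw [hdegQ]
  refine (degree_mul_le _ _).trans_lt ?_
  refine (add_le_add_left (degree_le_of_natDegree_le (natDegree_ofNat 2).le) _).trans_lt ?_
  rwa [Nat.cast_zero, zero_add]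

lemma eval_T_X (a : K) (l : ι → K) : (T X fun i => C (l i)).eval a = T a l := by
  rw [← coe_evalRingHom, map_T]
  simp

end CommRing

section Domain

variable {R : Type*} [CommRing R] [IsDomain R] [Algebra ℚ R]
  {ι : Type*} [Fintype ι] [DecidableEq ι] {l : ι → R}

lemma T_zero_ne_zero (hl0 : ∀ i, l i ≠ 0) : T 0 l ≠ 0 := by
  have := algebraRat.charZero R
  rw [T, Q_zero, W_zero, ← mul_assoc, ← one_add_mul]
  refine mul_ne_zero ?_ (prod_ne_zero_iff.2 fun i _ => hl0 i)
  exact_mod_cast (Nat.cast_ne_zero.2 (by omega) : ((1 + 2 * Fintype.card ι : ℕ) : R) ≠ 0)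

lemma T_neg_self_ne_zero (hl : Function.Injective l) {j : ι} (hj : l j ≠ 0) :
    T (-l j) l ≠ 0 := by
  have := algebraRat.charZero R
  rw [T, Q_neg_self, W_neg_self, zero_add]
  refine mul_ne_zero two_ne_zero (mul_ne_zero hj (prod_ne_zero_iff.2 fun k hk => ?_))
  exact sub_ne_zero.2 (hl.ne (mem_erase.1 hk).1)

lemma T_X_ne_zero (hl0 : ∀ i, l i ≠ 0) : (T X fun i => C (l i) : R[X]) ≠ 0 := fun h =>
  T_zero_ne_zero hl0 (by rw [← eval_T_X, h, eval_zero])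

theorem isRelPrime_X_mul_P_X_T_X [UniqueFactorizationMonoid R] (hl : Function.Injective l)
    (hl0 : ∀ i, l i ≠ 0) :
    IsRelPrime (X * P X fun i => C (l i)) (T X fun i => C (l i)) := by
  have hX : IsRelPrime X (T X fun i => C (l i)) := by
    simpa using isRelPrime_X_sub_C_of_eval_ne_zero (a := (0 : R))
      (by rw [eval_T_X]; exact T_zero_ne_zero hl0)
  have hlin (j : ι) : IsRelPrime (X + C (l j)) (T X fun i => C (l i)) := by
    simpa using isRelPrime_X_sub_C_of_eval_ne_zero (a := -l j)
      (by rw [eval_T_X]; exact T_neg_self_ne_zero hl (hl0 j))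
  have h2 : IsUnit (C 2 : R[X]) :=
    isUnit_C.2 <| by
      simpa only [map_ofNat] using (isUnit_of_invertible (2 : ℚ)).map (algebraMap ℚ R)
  have hsum : (X * P X fun i => C (l i)) + X * (T X fun i => C (l i)) =
      C 2 * (X * Q X fun i => C (l i)) := by
    simp only [P, T, map_ofNat]
    ring
  rw [← IsRelPrime.add_mul_right_left_iff (z := X), hsum, isRelPrime_mul_unit_left_left h2]
  exact hX.mul_left (IsRelPrime.prod_left fun j _ => hlin j)

end Domain

theorem irreducible_P_X_mvPolynomial (k : Type*) [Field k] [CharZero k] (n : ℕ) :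
    Irreducible (P X fun i => C (MvPolynomial.X i) : (MvPolynomial (Fin (n + 1)) k)[X]) := by
  set l : Fin n → (MvPolynomial (Fin n) k)[X] := fun j => C (MvPolynomial.X j)
  have hcons : (fun i => MvPolynomial.finSuccSwap k n (C (MvPolynomial.X i))) =
      Fin.cons X fun j => C (l j) := by
    funext i
    cases i using Fin.cases <;> simp [l]
  have hlin : MvPolynomial.finSuccSwap k n (P X fun i => C (MvPolynomial.X i)) =
      C (-T X l) * X + C (X * P X l) := by
    rw [map_P, hcons, P_cons, MvPolynomial.finSuccSwap_X]
    simp only [map_neg, map_mul, map_P, map_T]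
    ring
  rw [← MulEquiv.irreducible_iff (MvPolynomial.finSuccSwap k n).toMulEquiv]
  change Irreducible (MvPolynomial.finSuccSwap k n _)
  rw [hlin]
  exact irreducible_C_mul_X_add_C (neg_ne_zero.2 (T_X_ne_zero MvPolynomial.X_ne_zero))
    (isRelPrime_X_mul_P_X_T_X MvPolynomial.X_injective MvPolynomial.X_ne_zero).symm.neg_left

end PPoly

open Polynomial in
theorem PPoly_eq_map_P (d : ℕ) : PPoly d =
    (PPoly.P X fun i => C (MvPolynomial.X i) : (MvPolynomial (Fin d) ℚ)[X]).map
      (algebraMap _ _) := by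
  rw [← coe_mapRingHom, PPoly.map_P]
  simp only [coe_mapRingHom, map_X, map_C]
  rfl

/-- `P(t, λ)` is irreducible over `ℚ(λ₁, …, λ_d)`. -/
theorem PPoly_irreducible (d : ℕ) (hd : 1 ≤ d) : Irreducible (PPoly d) := by
  obtain ⟨n, rfl⟩ := Nat.exists_eq_add_of_le' hd
  rw [PPoly_eq_map_P]
  exact ((PPoly.monic_P_X _).irreducible_iff_irreducible_map_fraction_map).1
    (PPoly.irreducible_P_X_mvPolynomial ℚ n)
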